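/- arXiv:2006.07316 — 3 statements merged into one kernel-verified Lean document; each statement's English description precedes it below -/
import Mathlib

section
/- For a faithful density matrix π (positive definite, trace one) on a finite-dimensional Hilbert space, the bilinear form ⟨A,B⟩ := Tr[A 𝕁(B)], where 𝕁(B) := ∫₀¹ π^s B π^{1-s} ds, is a real inner product on the space of self-adjoint matrices: it is linear in each argument, symmetric, and positive definite. -/
/-!
Write `π = U diag(λ) U†` with `λᵢ > 0`, so that `π^s = U diag(λ^s) U†`. Then
`Tr[A 𝕁(B)] = ∑ᵢⱼ φᵢⱼ Ãᵢⱼ B̃ⱼᵢ` with `Ã = U† A U` and `φᵢⱼ = ∫₀¹ λⱼ^s λᵢ^{1-s} ds`, the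
logarithmic mean of `λᵢ` and `λⱼ`. The weights are positive, and symmetric under `s ↦ 1 - s`,
which gives symmetry of the form; for Hermitian `A` the diagonal value is `∑ᵢⱼ φᵢⱼ |Ãᵢⱼ|²`,
which vanishes only when `Ã = 0`, i.e. `A = 0`.
-/

open Matrix MeasureTheory ComplexOrder

/-- `mpow π hπ s` is the matrix power `π ^ s` for `s : ℝ`, defined via the spectral
decomposition of the Hermitian matrix `π`. -/
noncomputable def mpow {n : ℕ} (π : Matrix (Fin n) (Fin n) ℂ) (hπ : π.IsHermitian) (s : ℝ) :
    Matrix (Fin n) (Fin n) ℂ :=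
  (hπ.eigenvectorUnitary : Matrix (Fin n) (Fin n) ℂ) *
    Matrix.diagonal (fun i => ((hπ.eigenvalues i ^ s : ℝ) : ℂ)) *
    star (hπ.eigenvectorUnitary : Matrix (Fin n) (Fin n) ℂ)

/-- The logarithmic matrix mean `𝕁(B) = ∫₀¹ π^s B π^{1-s} ds`, defined entrywise. -/
noncomputable def Jmean {n : ℕ} (π : Matrix (Fin n) (Fin n) ℂ) (hπ : π.IsHermitian)
    (B : Matrix (Fin n) (Fin n) ℂ) : Matrix (Fin n) (Fin n) ℂ :=
  Matrix.of fun i j => ∫ s in (0:ℝ)..1, (mpow π hπ s * B * mpow π hπ (1 - s)) i j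

theorem Matrix.trace_mul_of_intervalIntegral {ι : Type*} [Fintype ι] {F : ℝ → Matrix ι ι ℂ}
    (hF : Continuous F) (A : Matrix ι ι ℂ) (a b : ℝ) :
    (A * of fun i j => ∫ s in a..b, F s i j).trace = ∫ s in a..b, (A * F s).trace := by
  have hentry : ∀ i j, Continuous fun s => A i j * F s j i := fun i j =>
    continuous_const.mul ((continuous_apply_apply j i).comp hF)
  simp only [trace, diag, mul_apply, of_apply, ← intervalIntegral.integral_const_mul]
  rw [intervalIntegral.integral_finsetSum (f := fun i s => ∑ j, A i j * F s j i)
    fun i _ => (continuous_finsetSum _ fun j _ => hentry i j).intervalIntegrable a b]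
  exact Finset.sum_congr rfl fun i _ =>
    (intervalIntegral.integral_finsetSum (f := fun j s => A i j * F s j i)
      fun j _ => (hentry i j).intervalIntegrable a b).symm

theorem Matrix.trace_mul_diagonal_mul_mul_diagonal {ι : Type*} [Fintype ι] [DecidableEq ι]
    (X Y : Matrix ι ι ℂ) (d e : ι → ℂ) :
    (X * diagonal d * Y * diagonal e).trace = ∑ i, ∑ j, d j * e i * (X i j * Y j i) := by
  simp only [trace, diag, mul_apply, diagonal_apply, mul_ite, mul_zero, Finset.sum_ite_eq',
    Finset.mem_univ, if_true, Finset.sum_mul]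
  exact Finset.sum_congr rfl fun i _ => Finset.sum_congr rfl fun j _ => by ring

section LogarithmicMean

variable {n : ℕ} {π : Matrix (Fin n) (Fin n) ℂ}

noncomputable def toEigenbasis (hπ : π.IsHermitian) :
    Matrix (Fin n) (Fin n) ℂ ≃⋆ₐ[ℂ] Matrix (Fin n) (Fin n) ℂ :=
  Unitary.conjStarAlgAut ℂ _ (star hπ.eigenvectorUnitary)

theorem toEigenbasis_apply (hπ : π.IsHermitian) (A : Matrix (Fin n) (Fin n) ℂ) :
    toEigenbasis hπ A = star (hπ.eigenvectorUnitary : Matrix (Fin n) (Fin n) ℂ) * A *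
      (hπ.eigenvectorUnitary : Matrix (Fin n) (Fin n) ℂ) :=
  Unitary.conjStarAlgAut_star_apply _ _

noncomputable def logMeanWeight (hπ : π.IsHermitian) (i j : Fin n) : ℝ :=
  ∫ s in (0:ℝ)..1, hπ.eigenvalues j ^ s * hπ.eigenvalues i ^ (1 - s)

theorem continuous_eigenvalue_rpow (hπ : π.PosDef) (i : Fin n) :
    Continuous fun s : ℝ => hπ.1.eigenvalues i ^ s :=
  Real.continuous_const_rpow (hπ.eigenvalues_pos i).ne'

theorem continuous_rpow_mul_rpow_one_sub (hπ : π.PosDef) (i j : Fin n) :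
    Continuous fun s : ℝ => hπ.1.eigenvalues j ^ s * hπ.1.eigenvalues i ^ (1 - s) :=
  (continuous_eigenvalue_rpow hπ j).mul
    ((continuous_eigenvalue_rpow hπ i).comp (continuous_const.sub continuous_id))

theorem continuous_mpow (hπ : π.PosDef) : Continuous (mpow π hπ.1) := by
  unfold mpow
  refine (continuous_const.matrix_mul (Continuous.matrix_diagonal ?_)).matrix_mul continuous_const
  exact continuous_pi fun i => Complex.continuous_ofReal.comp (continuous_eigenvalue_rpow hπ i)

theorem continuous_mpow_mul_mul_mpow (hπ : π.PosDef) (B : Matrix (Fin n) (Fin n) ℂ) :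
    Continuous fun s => mpow π hπ.1 s * B * mpow π hπ.1 (1 - s) :=
  ((continuous_mpow hπ).matrix_mul continuous_const).matrix_mul
    ((continuous_mpow hπ).comp (continuous_const.sub continuous_id))

theorem Jmean_smul_add (hπ : π.PosDef) (c : ℂ) (B C : Matrix (Fin n) (Fin n) ℂ) :
    Jmean π hπ.1 (c • B + C) = c • Jmean π hπ.1 B + Jmean π hπ.1 C := by
  have hint : ∀ (B : Matrix (Fin n) (Fin n) ℂ) i j, IntervalIntegrable
      (fun s => (mpow π hπ.1 s * B * mpow π hπ.1 (1 - s)) i j) volume 0 1 := fun B i j =>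
    ((continuous_apply_apply i j).comp (continuous_mpow_mul_mul_mpow hπ B)).intervalIntegrable 0 1
  ext i j
  simp only [Jmean, of_apply, Matrix.add_apply, Matrix.smul_apply, smul_eq_mul, Matrix.mul_add,
    Matrix.add_mul, Matrix.mul_smul, Matrix.smul_mul]
  rw [intervalIntegral.integral_add ((hint B i j).const_mul c) (hint C i j),
    intervalIntegral.integral_const_mul]

theorem trace_mul_mpow_mul_mul_mpow (hπ : π.IsHermitian) (A B : Matrix (Fin n) (Fin n) ℂ)
    (s t : ℝ) :
    (A * (mpow π hπ s * B * mpow π hπ t)).trace =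
      ∑ i, ∑ j, ((hπ.eigenvalues j ^ s * hπ.eigenvalues i ^ t : ℝ) : ℂ) *
        (toEigenbasis hπ A i j * toEigenbasis hπ B j i) := by
  set U : Matrix (Fin n) (Fin n) ℂ := (hπ.eigenvectorUnitary : Matrix (Fin n) (Fin n) ℂ)
  set Ds := diagonal fun i => ((hπ.eigenvalues i ^ s : ℝ) : ℂ)
  set Dt := diagonal fun i => ((hπ.eigenvalues i ^ t : ℝ) : ℂ)
  rw [show A * (mpow π hπ s * B * mpow π hπ t) = (A * U * Ds * star U * B * U * Dt) * star U by
      simp only [mpow]; noncomm_ring,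
    trace_mul_comm,
    show star U * (A * U * Ds * star U * B * U * Dt) = (star U * A * U) * Ds * (star U * B * U) * Dt
      by noncomm_ring,
    trace_mul_diagonal_mul_mul_diagonal, toEigenbasis_apply, toEigenbasis_apply]
  push_cast
  rfl

theorem logMeanWeight_pos (hπ : π.PosDef) (i j : Fin n) : 0 < logMeanWeight hπ.1 i j :=
  intervalIntegral.intervalIntegral_pos_of_pos
    ((continuous_rpow_mul_rpow_one_sub hπ i j).intervalIntegrable 0 1)
    (fun s => mul_pos (Real.rpow_pos_of_pos (hπ.eigenvalues_pos j) s)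
      (Real.rpow_pos_of_pos (hπ.eigenvalues_pos i) (1 - s))) one_pos

theorem logMeanWeight_comm (hπ : π.IsHermitian) (i j : Fin n) :
    logMeanWeight hπ i j = logMeanWeight hπ j i := by
  have hreflect := intervalIntegral.integral_comp_sub_left (a := 0) (b := 1)
    (fun s => hπ.eigenvalues i ^ s * hπ.eigenvalues j ^ (1 - s)) 1
  simp only [sub_sub_cancel, sub_zero, sub_self] at hreflect
  rw [logMeanWeight, logMeanWeight, ← hreflect]
  simp_rw [mul_comm]

theorem trace_mul_Jmean (hπ : π.PosDef) (A B : Matrix (Fin n) (Fin n) ℂ) :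
    (A * Jmean π hπ.1 B).trace =
      ∑ i, ∑ j, (logMeanWeight hπ.1 i j : ℂ) *
        (toEigenbasis hπ.1 A i j * toEigenbasis hπ.1 B j i) := by
  have hterm : ∀ i j, Continuous fun s : ℝ =>
      ((hπ.1.eigenvalues j ^ s * hπ.1.eigenvalues i ^ (1 - s) : ℝ) : ℂ) *
        (toEigenbasis hπ.1 A i j * toEigenbasis hπ.1 B j i) := fun i j =>
    (Complex.continuous_ofReal.comp (continuous_rpow_mul_rpow_one_sub hπ i j)).mul continuous_const
  rw [Jmean, trace_mul_of_intervalIntegral (continuous_mpow_mul_mul_mpow hπ B)]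
  simp_rw [trace_mul_mpow_mul_mul_mpow]
  rw [intervalIntegral.integral_finsetSum
    fun i _ => (continuous_finsetSum _ fun j _ => hterm i j).intervalIntegrable 0 1]
  refine Finset.sum_congr rfl fun i _ => ?_
  rw [intervalIntegral.integral_finsetSum fun j _ => (hterm i j).intervalIntegrable 0 1]
  refine Finset.sum_congr rfl fun j _ => ?_
  rw [intervalIntegral.integral_mul_const, intervalIntegral.integral_ofReal, logMeanWeight]

theorem trace_mul_Jmean_comm (hπ : π.PosDef) (A B : Matrix (Fin n) (Fin n) ℂ) :
    (A * Jmean π hπ.1 B).trace = (B * Jmean π hπ.1 A).trace := by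
  rw [trace_mul_Jmean hπ, trace_mul_Jmean hπ, Finset.sum_comm]
  refine Finset.sum_congr rfl fun i _ => Finset.sum_congr rfl fun j _ => ?_
  rw [logMeanWeight_comm, mul_comm (toEigenbasis hπ.1 A j i)]

theorem trace_mul_Jmean_self (hπ : π.PosDef) {A : Matrix (Fin n) (Fin n) ℂ} (hA : A.IsHermitian) :
    (A * Jmean π hπ.1 A).trace =
      ((∑ i, ∑ j, logMeanWeight hπ.1 i j * Complex.normSq (toEigenbasis hπ.1 A i j) : ℝ) : ℂ) := by
  have hAt : (toEigenbasis hπ.1 A).IsHermitian := by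
    rw [IsHermitian, ← star_eq_conjTranspose, ← map_star, star_eq_conjTranspose, hA]
  rw [trace_mul_Jmean hπ]
  push_cast
  refine Finset.sum_congr rfl fun i _ => Finset.sum_congr rfl fun j _ => ?_
  rw [← hAt.apply j i, ← Complex.mul_conj]
  rfl

theorem re_trace_mul_Jmean_self_pos (hπ : π.PosDef) {A : Matrix (Fin n) (Fin n) ℂ}
    (hA : A.IsHermitian) (hA0 : A ≠ 0) : 0 < (A * Jmean π hπ.1 A).trace.re := by
  obtain ⟨i, j, hij⟩ : ∃ i j, toEigenbasis hπ.1 A i j ≠ 0 := by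
    by_contra! h
    exact (map_ne_zero_iff _ (toEigenbasis hπ.1).injective).2 hA0 (ext h)
  have hnonneg : ∀ i j, 0 ≤ logMeanWeight hπ.1 i j * Complex.normSq (toEigenbasis hπ.1 A i j) :=
    fun i j => mul_nonneg (logMeanWeight_pos hπ i j).le (Complex.normSq_nonneg _)
  rw [trace_mul_Jmean_self hπ hA, Complex.ofReal_re]
  calc 0 < logMeanWeight hπ.1 i j * Complex.normSq (toEigenbasis hπ.1 A i j) :=
        mul_pos (logMeanWeight_pos hπ i j) (Complex.normSq_pos.2 hij)
    _ ≤ ∑ j, logMeanWeight hπ.1 i j * Complex.normSq (toEigenbasis hπ.1 A i j) :=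
        Finset.single_le_sum (fun j _ => hnonneg i j) (Finset.mem_univ j)
    _ ≤ _ := Finset.single_le_sum (f := fun i => ∑ j, _)
        (fun i _ => Finset.sum_nonneg fun j _ => hnonneg i j) (Finset.mem_univ i)

end LogarithmicMean

theorem stmt0_general {n : ℕ} (π : Matrix (Fin n) (Fin n) ℂ) (hπ : π.PosDef) :
    (∀ (A B C : Matrix (Fin n) (Fin n) ℂ), A.IsHermitian → B.IsHermitian → C.IsHermitian →
      ∀ c : ℝ, ((((c : ℂ) • A + B) * Jmean π hπ.1 C).trace) =
        (c : ℂ) * (A * Jmean π hπ.1 C).trace + (B * Jmean π hπ.1 C).trace) ∧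
    (∀ (A B C : Matrix (Fin n) (Fin n) ℂ), A.IsHermitian → B.IsHermitian → C.IsHermitian →
      ∀ c : ℝ, ((A * Jmean π hπ.1 ((c : ℂ) • B + C)).trace) =
        (c : ℂ) * (A * Jmean π hπ.1 B).trace + (A * Jmean π hπ.1 C).trace) ∧
    (∀ (A B : Matrix (Fin n) (Fin n) ℂ), A.IsHermitian → B.IsHermitian →
      (A * Jmean π hπ.1 B).trace = (B * Jmean π hπ.1 A).trace) ∧
    (∀ (A : Matrix (Fin n) (Fin n) ℂ), A.IsHermitian →
      ((A * Jmean π hπ.1 A).trace.im = 0 ∧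
        (0 ≤ (A * Jmean π hπ.1 A).trace.re) ∧ (A ≠ 0 → 0 < (A * Jmean π hπ.1 A).trace.re))) := by
  refine ⟨fun A B C _ _ _ c => ?_, fun A B C _ _ _ c => ?_,
    fun A B _ _ => trace_mul_Jmean_comm hπ A B,
    fun A hA => ⟨?_, ?_, re_trace_mul_Jmean_self_pos hπ hA⟩⟩
  · rw [Matrix.add_mul, Matrix.smul_mul, trace_add, trace_smul, smul_eq_mul]
  · rw [Jmean_smul_add hπ, Matrix.mul_add, Matrix.mul_smul, trace_add, trace_smul, smul_eq_mul]
  · rw [trace_mul_Jmean_self hπ hA, Complex.ofReal_im]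
  · rcases eq_or_ne A 0 with rfl | hA0
    · simp
    · exact (re_trace_mul_Jmean_self_pos hπ hA hA0).le

/-- For a faithful density matrix `π`, the bilinear form `⟨A,B⟩ = Tr[A 𝕁(B)]` is a real
inner product on self-adjoint matrices: real-linear in the first argument, symmetric,
real-valued and positive definite on Hermitian matrices. -/
theorem stmt0 {n : ℕ} (π : Matrix (Fin n) (Fin n) ℂ) (hπ : π.PosDef) (htr : π.trace = 1) :
    (∀ (A B C : Matrix (Fin n) (Fin n) ℂ), A.IsHermitian → B.IsHermitian → C.IsHermitian →
      ∀ c : ℝ, ((((c : ℂ) • A + B) * Jmean π hπ.1 C).trace) =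
        (c : ℂ) * (A * Jmean π hπ.1 C).trace + (B * Jmean π hπ.1 C).trace) ∧
    (∀ (A B C : Matrix (Fin n) (Fin n) ℂ), A.IsHermitian → B.IsHermitian → C.IsHermitian →
      ∀ c : ℝ, ((A * Jmean π hπ.1 ((c : ℂ) • B + C)).trace) =
        (c : ℂ) * (A * Jmean π hπ.1 B).trace + (A * Jmean π hπ.1 C).trace) ∧
    (∀ (A B : Matrix (Fin n) (Fin n) ℂ), A.IsHermitian → B.IsHermitian →
      (A * Jmean π hπ.1 B).trace = (B * Jmean π hπ.1 A).trace) ∧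
    (∀ (A : Matrix (Fin n) (Fin n) ℂ), A.IsHermitian →
      ((A * Jmean π hπ.1 A).trace.im = 0 ∧
        (0 ≤ (A * Jmean π hπ.1 A).trace.re) ∧ (A ≠ 0 → 0 < (A * Jmean π hπ.1 A).trace.re))) :=
  stmt0_general π hπ
end

section
/- The Wigner–Yanase–Dyson skew covariance ℐ(A,A) := -(1/2)∫₀¹ Tr[[A,π^s][A,π^{1-s}]] ds is nonnegative for every Hermitian A, and vanishes if [A,π]=0. -/
/-!
In an orthonormal eigenbasis of `π`, with eigenvalues `λᵢ` and `B = U⋆ A U`, the commutator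
`[A, π^s]` has entries `B i j * (λⱼ^s - λᵢ^s)`, so
`Tr[[A,π^s][A,π^t]] = -∑ᵢⱼ |B i j|² (λⱼ^s - λᵢ^s)(λⱼ^t - λᵢ^t)`.
For `s, t ≥ 0` both `x ↦ x^s` and `x ↦ x^t` are monotone on `[0, ∞)`, so every summand is
nonnegative and the integrand of `ℐ(A,A)` is real and nonpositive. If `[A, π] = 0` then
`B i j = 0` whenever `λᵢ ≠ λⱼ`, and every summand vanishes.
-/

open Matrix MeasureTheory ComplexOrder

namespace Matrix

lemma IsHermitian.mul_apply_swap {ι : Type*} {B : Matrix ι ι ℂ} (hB : B.IsHermitian) (i j : ι) :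
    B i j * B j i = Complex.normSq (B i j) := by
  rw [← hB.apply j i]
  exact Complex.mul_conj _

variable {ι R : Type*} [Fintype ι] [DecidableEq ι]

section Unitary

variable [CommRing R] [StarRing R] {U : Matrix ι ι R}

lemma commutator_unitary_conj (hU : U ∈ unitary (Matrix ι ι R)) (A D : Matrix ι ι R) :
    A * (U * D * star U) - U * D * star U * A =
      U * (star U * A * U * D - D * (star U * A * U)) * star U := by
  have h₁ := Unitary.star_mul_self_of_mem hU
  have h₂ := Unitary.mul_star_self_of_mem hU
  rw [Matrix.mul_sub, Matrix.sub_mul]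
  congr 1
  · simp only [← mul_assoc, h₂, one_mul]
  · simp only [mul_assoc, h₂, mul_one]

lemma commute_star_conj_of_commute_conj (hU : U ∈ unitary (Matrix ι ι R)) {A D : Matrix ι ι R}
    (h : Commute A (U * D * star U)) : Commute (star U * A * U) D := by
  have h₁ := Unitary.star_mul_self_of_mem hU
  have hconj := commutator_unitary_conj hU A D
  rw [sub_eq_zero.2 h.eq] at hconj
  have := congrArg (fun X => star U * X * U) hconj
  simp only [Matrix.mul_zero, Matrix.zero_mul, ← mul_assoc, h₁, one_mul] at this
  simp only [mul_assoc, h₁, mul_one] at this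
  exact sub_eq_zero.1 (by simpa only [mul_assoc] using this.symm)

lemma trace_unitary_conj_mul (hU : U ∈ unitary (Matrix ι ι R)) (X Y : Matrix ι ι R) :
    (U * X * star U * (U * Y * star U)).trace = (X * Y).trace := by
  have h₁ := Unitary.star_mul_self_of_mem hU
  rw [show U * X * star U * (U * Y * star U) = U * (X * Y) * star U by
      simp only [mul_assoc, ← mul_assoc (star U) U, h₁, one_mul],
    trace_mul_cycle, ← mul_assoc, h₁, one_mul]

end Unitary

lemma trace_commutator_diagonal_mul [CommRing R] (B : Matrix ι ι R) (d e : ι → R) :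
    ((B * diagonal d - diagonal d * B) * (B * diagonal e - diagonal e * B)).trace =
      -∑ i, ∑ j, B i j * B j i * ((d j - d i) * (e j - e i)) := by
  have entry (f : ι → R) : B * diagonal f - diagonal f * B = of fun i j => B i j * (f j - f i) := by
    ext i j
    simp only [sub_apply, mul_diagonal, diagonal_mul, of_apply]
    ring
  simp only [entry, trace, diag, mul_apply, of_apply, ← Finset.sum_neg_distrib]
  refine Finset.sum_congr rfl fun i _ => Finset.sum_congr rfl fun j _ => ?_
  ring

lemma apply_eq_zero_or_eq_of_commute_diagonal [CommRing R] [NoZeroDivisors R]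
    {B : Matrix ι ι R} {d : ι → R} (h : Commute B (diagonal d)) (i j : ι) :
    B i j = 0 ∨ d i = d j := by
  have hij := congrFun (congrFun h.eq i) j
  simp only [mul_diagonal, diagonal_mul] at hij
  have : B i j * (d j - d i) = 0 := by linear_combination hij
  rcases mul_eq_zero.1 this with h | h
  · exact Or.inl h
  · exact Or.inr (sub_eq_zero.1 h).symm

end Matrix

lemma Real.rpow_sub_mul_rpow_sub_nonneg {a b s t : ℝ} (ha : 0 ≤ a) (hb : 0 ≤ b)
    (hs : 0 ≤ s) (ht : 0 ≤ t) : 0 ≤ (b ^ s - a ^ s) * (b ^ t - a ^ t) := by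
  rcases le_total a b with hab | hba
  · exact mul_nonneg (sub_nonneg.2 (rpow_le_rpow ha hab hs)) (sub_nonneg.2 (rpow_le_rpow ha hab ht))
  · exact mul_nonneg_of_nonpos_of_nonpos (sub_nonpos.2 (rpow_le_rpow hb hba hs))
      (sub_nonpos.2 (rpow_le_rpow hb hba ht))

section SkewInformation

variable {n : ℕ} {π : Matrix (Fin n) (Fin n) ℂ}

noncomputable def eigenbasisConj (hπ : π.IsHermitian) (A : Matrix (Fin n) (Fin n) ℂ) :
    Matrix (Fin n) (Fin n) ℂ :=
  star (hπ.eigenvectorUnitary : Matrix (Fin n) (Fin n) ℂ) * A * hπ.eigenvectorUnitary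

noncomputable def skewIntegrand (hπ : π.IsHermitian) (A : Matrix (Fin n) (Fin n) ℂ) (s t : ℝ) :
    ℝ :=
  ∑ i, ∑ j, Complex.normSq (eigenbasisConj hπ A i j) *
    ((hπ.eigenvalues j ^ s - hπ.eigenvalues i ^ s) * (hπ.eigenvalues j ^ t - hπ.eigenvalues i ^ t))

lemma trace_commutator_mpow_mul (hπ : π.IsHermitian) {A : Matrix (Fin n) (Fin n) ℂ}
    (hA : A.IsHermitian) (s t : ℝ) :
    ((A * mpow π hπ s - mpow π hπ s * A) * (A * mpow π hπ t - mpow π hπ t * A)).trace =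
      -(skewIntegrand hπ A s t : ℂ) := by
  have hB : (eigenbasisConj hπ A).IsHermitian := by
    simpa [eigenbasisConj, star_eq_conjTranspose] using
      isHermitian_conjTranspose_mul_mul (hπ.eigenvectorUnitary : Matrix (Fin n) (Fin n) ℂ) hA
  rw [mpow, mpow, commutator_unitary_conj hπ.eigenvectorUnitary.2,
    commutator_unitary_conj hπ.eigenvectorUnitary.2,
    trace_unitary_conj_mul hπ.eigenvectorUnitary.2, ← eigenbasisConj, trace_commutator_diagonal_mul,
    skewIntegrand]
  push_cast
  simp only [hB.mul_apply_swap]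

lemma skewIntegrand_nonneg (hπ : π.PosSemidef) (A : Matrix (Fin n) (Fin n) ℂ) {s t : ℝ}
    (hs : 0 ≤ s) (ht : 0 ≤ t) : 0 ≤ skewIntegrand hπ.1 A s t :=
  Finset.sum_nonneg fun i _ => Finset.sum_nonneg fun j _ =>
    mul_nonneg (Complex.normSq_nonneg _) <| Real.rpow_sub_mul_rpow_sub_nonneg
      (hπ.eigenvalues_nonneg i) (hπ.eigenvalues_nonneg j) hs ht

lemma commute_eigenbasisConj_diagonal (hπ : π.IsHermitian) {A : Matrix (Fin n) (Fin n) ℂ}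
    (hAπ : Commute A π) :
    Commute (eigenbasisConj hπ A) (diagonal fun i => (hπ.eigenvalues i : ℂ)) := by
  have hspec : π = hπ.eigenvectorUnitary * diagonal (fun i => (hπ.eigenvalues i : ℂ)) *
      star (hπ.eigenvectorUnitary : Matrix (Fin n) (Fin n) ℂ) := by
    convert hπ.spectral_theorem using 1
    rw [Unitary.conjStarAlgAut_apply]
    rfl
  rw [hspec] at hAπ
  exact commute_star_conj_of_commute_conj hπ.eigenvectorUnitary.2 hAπ

lemma skewIntegrand_eq_zero_of_commute (hπ : π.IsHermitian) {A : Matrix (Fin n) (Fin n) ℂ}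
    (hAπ : Commute A π) (s t : ℝ) : skewIntegrand hπ A s t = 0 := by
  refine Finset.sum_eq_zero fun i _ => Finset.sum_eq_zero fun j _ => ?_
  rcases apply_eq_zero_or_eq_of_commute_diagonal (commute_eigenbasisConj_diagonal hπ hAπ) i j
    with h | h
  · simp [h]
  · simp [Complex.ofReal_injective h]

end SkewInformation

theorem stmt5_general {n : ℕ} (π : Matrix (Fin n) (Fin n) ℂ) (hπ : π.PosDef)
    (A : Matrix (Fin n) (Fin n) ℂ) (hA : A.IsHermitian) :
    ((-(1/2 : ℂ)) * ∫ s in (0:ℝ)..1,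
      ((A * mpow π hπ.1 s - mpow π hπ.1 s * A) *
        (A * mpow π hπ.1 (1 - s) - mpow π hπ.1 (1 - s) * A)).trace).im = 0 ∧
    0 ≤ ((-(1/2 : ℂ)) * ∫ s in (0:ℝ)..1,
      ((A * mpow π hπ.1 s - mpow π hπ.1 s * A) *
        (A * mpow π hπ.1 (1 - s) - mpow π hπ.1 (1 - s) * A)).trace).re ∧
    (A * π - π * A = 0 →
      ((-(1/2 : ℂ)) * ∫ s in (0:ℝ)..1,
        ((A * mpow π hπ.1 s - mpow π hπ.1 s * A) *
          (A * mpow π hπ.1 (1 - s) - mpow π hπ.1 (1 - s) * A)).trace) = 0) := by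
  set I : ℝ := ∫ s in (0:ℝ)..1, skewIntegrand hπ.1 A s (1 - s) with hI
  have hint : (-(1/2 : ℂ)) * (∫ s in (0:ℝ)..1,
      ((A * mpow π hπ.1 s - mpow π hπ.1 s * A) *
        (A * mpow π hπ.1 (1 - s) - mpow π hπ.1 (1 - s) * A)).trace) = ((I / 2 : ℝ) : ℂ) := by
    simp only [trace_commutator_mpow_mul hπ.1 hA, ← Complex.ofReal_neg]
    rw [intervalIntegral.integral_ofReal, intervalIntegral.integral_neg]
    push_cast
    ring
  rw [hint]
  refine ⟨Complex.ofReal_im _, ?_, fun hAπ => ?_⟩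
  · rw [Complex.ofReal_re]
    refine div_nonneg (intervalIntegral.integral_nonneg zero_le_one fun s hs => ?_) zero_le_two
    exact skewIntegrand_nonneg hπ.posSemidef A hs.1 (sub_nonneg.2 hs.2)
  · simp [hI, skewIntegrand_eq_zero_of_commute hπ.1 (sub_eq_zero.1 hAπ)]

/-- The Wigner–Yanase–Dyson skew covariance
`ℐ(A,A) = -(1/2) ∫₀¹ Tr[[A,π^s][A,π^{1-s}]] ds` is real and nonnegative for Hermitian `A`,
and vanishes when `[A,π] = 0`. -/
theorem stmt5 {n : ℕ} (π : Matrix (Fin n) (Fin n) ℂ) (hπ : π.PosDef) (htr : π.trace = 1)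
    (A : Matrix (Fin n) (Fin n) ℂ) (hA : A.IsHermitian) :
    ((-(1/2 : ℂ)) * ∫ s in (0:ℝ)..1,
      ((A * mpow π hπ.1 s - mpow π hπ.1 s * A) *
        (A * mpow π hπ.1 (1 - s) - mpow π hπ.1 (1 - s) * A)).trace).im = 0 ∧
    0 ≤ ((-(1/2 : ℂ)) * ∫ s in (0:ℝ)..1,
      ((A * mpow π hπ.1 s - mpow π hπ.1 s * A) *
        (A * mpow π hπ.1 (1 - s) - mpow π hπ.1 (1 - s) * A)).trace).re ∧
    (A * π - π * A = 0 →
      ((-(1/2 : ℂ)) * ∫ s in (0:ℝ)..1,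
        ((A * mpow π hπ.1 s - mpow π hπ.1 s * A) *
          (A * mpow π hπ.1 (1 - s) - mpow π hπ.1 (1 - s) * A)).trace) = 0) :=
  stmt5_general π hπ A hA
end

section
/- Suppose real numbers satisfy σ ≥ 0, J_q > 0, P_w > 0, σ = (η_C·J_q − P_w)/T_c with T_c > 0 and 0 < η_C < 1, and the TUR V·σ ≥ 2·f·P_w² with V > 0 and f ≥ 0. Then the efficiency η := P_w/J_q satisfies η ≤ η_C/(1 + 2·T_c·f·P_w/V). -/
/-- Efficiency bound from the TUR: if `σ ≥ 0`, `σ = (η_C·J_q - P_w)/T_c` and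
`V·σ ≥ 2·f·P_w²`, then the efficiency `η = P_w/J_q` satisfies
`η ≤ η_C / (1 + 2·T_c·f·P_w/V)`. -/
theorem stmt9 (Tc ηC Jq Pw σ V f : ℝ)
    (hTc : 0 < Tc) (hηC : 0 < ηC) (hηC' : ηC < 1) (hJ : 0 < Jq) (hP : 0 < Pw)
    (hσ : 0 ≤ σ) (hbal : σ = (ηC * Jq - Pw) / Tc)
    (hV : 0 < V) (hf : 0 ≤ f) (hTUR : V * σ ≥ 2 * f * Pw ^ 2) :
    Pw / Jq ≤ ηC / (1 + 2 * Tc * f * Pw / V) := by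
  have hD : 0 < 1 + 2 * Tc * f * Pw / V := by positivity
  have hst : σ * Tc = ηC * Jq - Pw := by rw [hbal]; field_simp
  have key : 2 * f * Pw ^ 2 * Tc ≤ V * (ηC * Jq - Pw) := by nlinarith
  rw [div_le_div_iff₀ hJ hD]
  have hexp : Pw * (1 + 2 * Tc * f * Pw / V) * V = Pw * V + 2 * Tc * f * Pw ^ 2 := by
    field_simp
  have h2 : Pw * (1 + 2 * Tc * f * Pw / V) * V ≤ ηC * Jq * V := by
    rw [hexp]; nlinarith
  exact le_of_mul_le_mul_right h2 hV
end
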